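/- A domain D in the d-regular tree T_d with |D| ≥ 2 is isoperimetrically optimal if and only if τ(D) ≤ d − 2. -/

import Mathlib

/-- Inner vertex boundary of a finite vertex set `D`: vertices of `D` having a neighbor
outside `D`. -/
noncomputable def innerBoundary {V : Type*} (G : SimpleGraph V) (D : Finset V) : Finset V := by
  classical exact D.filter (fun x => ∃ y, y ∉ D ∧ G.Adj x y)

/-- Outer vertex boundary of `D`: vertices outside `D` having a neighbor in `D`. -/
def outerBoundary {V : Type*} (G : SimpleGraph V) (D : Finset V) : Set V :=
  {y | y ∉ D ∧ ∃ x ∈ D, G.Adj x y}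

/-- Number of neighbors of `x` lying in `D`. -/
noncomputable def degIn {V : Type*} (G : SimpleGraph V) (D : Finset V) (x : V) : ℕ := by
  classical exact (D.filter (fun y => G.Adj x y)).card

/-- A domain: a finite nonempty vertex set whose induced subgraph is connected. -/
def IsGraphDomain {V : Type*} (G : SimpleGraph V) (D : Finset V) : Prop :=
  D.Nonempty ∧ (G.induce (↑D : Set V)).Connected

/-- `G` is a `d`-regular tree: connected, acyclic, and every vertex has degree `d`. -/
def IsRegularTree {V : Type*} (G : SimpleGraph V) (d : ℕ) : Prop :=
  G.Connected ∧ G.IsAcyclic ∧ ∀ v : V, (G.neighborSet v).ncard = d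

/-- Boundary branching excess `τ(D) = Σ_{x ∈ ∂D} (deg_D(x) − 1)`. -/
noncomputable def tauD {V : Type*} (G : SimpleGraph V) (D : Finset V) : ℕ :=
  ∑ x ∈ innerBoundary G D, (degIn G D x - 1)

/-- Residual boundary `R(D) = {x ∈ ∂D : deg_D(x) ≥ 2}`. -/
noncomputable def residualBoundary {V : Type*} (G : SimpleGraph V) (D : Finset V) : Finset V := by
  classical exact (innerBoundary G D).filter (fun x => 2 ≤ degIn G D x)

/-- `D` is isoperimetrically optimal: its inner boundary is smallest among all domains
of the same cardinality. -/
def IsOptimal {V : Type*} (G : SimpleGraph V) (D : Finset V) : Prop :=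
  ∀ D' : Finset V, IsGraphDomain G D' → D'.card = D.card →
    (innerBoundary G D).card ≤ (innerBoundary G D').card

/-!
For a domain `D` with `|D| ≥ 2` the induced subgraph is a tree and the vertices of `D \ ∂D`
have full degree `d`, so counting degrees gives `(d - 1)|∂D| = τ(D) + (d - 2)|D| + 2`. Among
domains of a given size, `|∂D|` is therefore an increasing function of `τ(D)`, and `τ` can only
change by multiples of `d - 1`. So `D` is optimal iff `τ(D)` is minimal, and the minimum is at
most `d - 2`: growing a domain one vertex at a time, always attaching the new vertex at the only
boundary vertex with `deg_D ≥ 2` (or at a leaf if there is none), keeps at most one such vertex,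
and it contributes at most `d - 2` to `τ`.
-/

open Finset SimpleGraph
open scoped Classical

section
variable {V : Type*} {T : SimpleGraph V} {D : Finset V} {x y z : V}

lemma mem_innerBoundary : x ∈ innerBoundary T D ↔ x ∈ D ∧ ∃ y, y ∉ D ∧ T.Adj x y := by
  simp [innerBoundary]

lemma innerBoundary_subset : innerBoundary T D ⊆ D := fun _ hx => (mem_innerBoundary.1 hx).1

lemma degIn_eq_card_filter : degIn T D x = #(D.filter (T.Adj x)) := by
  simp [degIn]

lemma degIn_eq_ncard : degIn T D x = (↑D ∩ T.neighborSet x).ncard := by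
  rw [degIn_eq_card_filter, ← Set.ncard_coe_finset]
  congr 1
  ext
  simp

lemma degIn_le_ncard (hfin : (T.neighborSet x).Finite) :
    degIn T D x ≤ (T.neighborSet x).ncard := by
  rw [degIn_eq_ncard]
  exact Set.ncard_le_ncard Set.inter_subset_right hfin

lemma mem_innerBoundary_iff_degIn_lt (hfin : (T.neighborSet x).Finite) (hx : x ∈ D) :
    x ∈ innerBoundary T D ↔ degIn T D x < (T.neighborSet x).ncard := by
  have hle := degIn_le_ncard (D := D) hfin
  have hcard : (↑D ∩ T.neighborSet x).ncard = (T.neighborSet x).ncard ↔ T.neighborSet x ⊆ D :=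
    ⟨fun h => Set.inter_eq_right.1
        (Set.eq_of_subset_of_ncard_le Set.inter_subset_right h.ge hfin),
      fun h => by rw [Set.inter_eq_right.2 h]⟩
  rw [hle.lt_iff_ne, degIn_eq_ncard, Ne, hcard, mem_innerBoundary, Set.not_subset]
  simp [hx, and_comm]

lemma degree_induce_eq_degIn (v : (↑D : Set V)) : (T.induce ↑D).degree v = degIn T D v := by
  rw [degIn_eq_card_filter, ← card_neighborFinset_eq_degree,
    ← card_map (Function.Embedding.subtype (· ∈ (↑D : Set V)))]
  congr 1
  ext
  simp [and_comm]

lemma IsGraphDomain.sum_degIn (hT : T.IsAcyclic) (hD : IsGraphDomain T D) :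
    ∑ x ∈ D, degIn T D x = 2 * (#D - 1) := by
  have htree : (T.induce (↑D : Set V)).IsTree := ⟨hD.2, hT.induce _⟩
  have hedges : #(T.induce (↑D : Set V)).edgeFinset + 1 = #D := by
    simpa using htree.card_edgeFinset
  calc ∑ x ∈ D, degIn T D x = ∑ v : (↑D : Set V), (T.induce ↑D).degree v := by
        simp_rw [degree_induce_eq_degIn]
        exact (Finset.sum_coe_sort D _).symm
    _ = 2 * (#D - 1) := by rw [sum_degrees_eq_twice_card_edges]; omega

lemma IsGraphDomain.one_le_degIn (hD : IsGraphDomain T D) (hcard : 2 ≤ #D) (hx : x ∈ D) :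
    1 ≤ degIn T D x := by
  have : Nontrivial (↑D : Set V) := Finset.one_lt_card_iff_nontrivial.1 hcard |>.coe_sort
  rw [← degree_induce_eq_degIn ⟨x, hx⟩]
  exact hD.2.preconnected.degree_pos_of_nontrivial _

lemma IsGraphDomain.exists_degIn_lt_two (hT : T.IsAcyclic) (hD : IsGraphDomain T D) :
    ∃ x ∈ D, degIn T D x < 2 := by
  apply exists_lt_of_sum_lt
  rw [hD.sum_degIn hT, sum_const, smul_eq_mul]
  have := hD.1.card_pos
  omega

lemma IsGraphDomain.exists_isPath (hD : IsGraphDomain T D) (hx : x ∈ D) (hy : y ∈ D) :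
    ∃ p : T.Walk x y, p.IsPath ∧ ∀ v ∈ p.support, v ∈ D := by
  obtain ⟨p, hp⟩ := (hD.2.preconnected ⟨x, hx⟩ ⟨y, hy⟩).exists_isPath
  let f : T.induce (↑D : Set V) ↪g T := Embedding.induce _
  have hsupp : ∀ v ∈ (p.map f.toHom).support, v ∈ D := by
    simp only [Walk.support_map, List.mem_map]
    rintro _ ⟨u, -, rfl⟩
    exact u.2
  exact ⟨p.map f.toHom, hp.map f.injective, hsupp⟩

lemma IsGraphDomain.eq_of_adj_of_adj (hT : T.IsAcyclic) (hD : IsGraphDomain T D) (hy : y ∉ D)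
    (hx : x ∈ D) (hz : z ∈ D) (hxy : T.Adj x y) (hzy : T.Adj z y) : x = z := by
  by_contra hxz
  obtain ⟨p, hp, hpD⟩ := hD.exists_isPath hx hz
  have hq : hxy.toWalk.IsPath := Walk.IsPath.of_adj hxy
  have hzq : z ∉ hxy.toWalk.support := by
    simp only [Adj.toWalk, Walk.support_cons, Walk.support_nil, List.mem_cons, List.not_mem_nil]
    rintro (rfl | rfl | h)
    · exact hxz rfl
    · exact hy hz
    · exact h
  exact hy (hpD y (hT.mem_support_of_ne_mem_support_of_adj_of_isPath hp hq hzy hzq))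

lemma IsGraphDomain.insert_of_adj (hD : IsGraphDomain T D) (hx : x ∈ D) (hxy : T.Adj x y) :
    IsGraphDomain T (insert y D) := by
  refine ⟨insert_nonempty y D, ?_⟩
  rw [coe_insert, Set.insert_eq]
  refine connected_induce_union ?_ hD.2.preconnected (Set.mem_singleton y) hx hxy.symm
  rw [induce_singleton_eq_top]
  exact preconnected_top

lemma IsGraphDomain.degIn_insert_self (hT : T.IsAcyclic) (hD : IsGraphDomain T D) (hx : x ∈ D)
    (hy : y ∉ D) (hxy : T.Adj x y) : degIn T (insert y D) y = 1 := by
  rw [degIn_eq_card_filter, card_eq_one]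
  refine ⟨x, eq_singleton_iff_unique_mem.2 ⟨by simp [hx, hxy.symm], ?_⟩⟩
  simp only [mem_filter, mem_insert, and_imp]
  rintro z (rfl | hz) hyz
  · exact absurd hyz (T.loopless.irrefl _)
  · exact hD.eq_of_adj_of_adj hT hy hz hx hyz.symm hxy

lemma IsGraphDomain.degIn_insert_of_ne (hT : T.IsAcyclic) (hD : IsGraphDomain T D) (hx : x ∈ D)
    (hy : y ∉ D) (hxy : T.Adj x y) (hz : z ∈ D) (hzx : z ≠ x) :
    degIn T (insert y D) z = degIn T D z := by
  rw [degIn_eq_card_filter, degIn_eq_card_filter, filter_insert,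
    if_neg fun hzy => hzx (hD.eq_of_adj_of_adj hT hy hz hx hzy hxy)]

lemma IsGraphDomain.residualBoundary_insert_subset (hT : T.IsAcyclic) (hD : IsGraphDomain T D)
    (hx : x ∈ D) (hy : y ∉ D) (hxy : T.Adj x y) (hres : residualBoundary T D ⊆ {x}) :
    residualBoundary T (insert y D) ⊆ {x} := by
  intro z hz
  simp only [residualBoundary, mem_filter, mem_innerBoundary, mem_insert] at hz
  obtain ⟨⟨hzy | hzD, w, hw, hzw⟩, hdeg⟩ := hz
  · subst hzy
    rw [hD.degIn_insert_self hT hx hy hxy] at hdeg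
    omega
  · by_contra hzx
    rw [hD.degIn_insert_of_ne hT hx hy hxy hzD (by simpa using hzx)] at hdeg
    refine hzx (hres ?_)
    simp only [residualBoundary, mem_filter, mem_innerBoundary]
    exact ⟨⟨hzD, w, fun hwD => hw (Or.inr hwD), hzw⟩, hdeg⟩

end

section
variable {V : Type*} {T : SimpleGraph V} {d : ℕ} {D D' : Finset V}

lemma IsRegularTree.neighborSet_finite (hT : IsRegularTree T d) (hd : d ≠ 0) (x : V) :
    (T.neighborSet x).Finite :=
  Set.finite_of_ncard_ne_zero (by rw [hT.2.2 x]; exact hd)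

lemma IsGraphDomain.tauD_add_card_innerBoundary (hD : IsGraphDomain T D) (hcard : 2 ≤ #D) :
    tauD T D + #(innerBoundary T D) = ∑ x ∈ innerBoundary T D, degIn T D x := by
  rw [tauD, card_eq_sum_ones, ← sum_add_distrib]
  exact sum_congr rfl fun x hx =>
    Nat.sub_add_cancel (hD.one_le_degIn hcard (innerBoundary_subset hx))

lemma IsGraphDomain.sum_innerBoundary_degIn_add (hT : IsRegularTree T d) (hd : d ≠ 0)
    (hD : IsGraphDomain T D) :
    ∑ x ∈ innerBoundary T D, degIn T D x + d * #(D \ innerBoundary T D) = 2 * (#D - 1) := by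
  have hinterior : ∀ x ∈ D \ innerBoundary T D, degIn T D x = d := by
    intro x hx
    obtain ⟨hxD, hxB⟩ := mem_sdiff.1 hx
    rw [mem_innerBoundary_iff_degIn_lt (hT.neighborSet_finite hd x) hxD, hT.2.2 x] at hxB
    have := degIn_le_ncard (D := D) (hT.neighborSet_finite hd x)
    rw [hT.2.2 x] at this
    omega
  rw [← hD.sum_degIn hT.2.1, ← sum_sdiff (innerBoundary_subset (T := T) (D := D)),
    sum_const_nat hinterior]
  ring

lemma IsGraphDomain.card_innerBoundary_mul (hT : IsRegularTree T d) (hd : 2 ≤ d)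
    (hD : IsGraphDomain T D) (hcard : 2 ≤ #D) :
    (d - 1) * #(innerBoundary T D) = tauD T D + (d - 2) * #D + 2 := by
  have h1 := hD.tauD_add_card_innerBoundary hcard
  have h2 := hD.sum_innerBoundary_degIn_add hT (by omega)
  have hB := card_le_card (innerBoundary_subset (T := T) (D := D))
  rw [card_sdiff_of_subset innerBoundary_subset] at h2
  zify [hd, hB, (by omega : 1 ≤ d), (by omega : 1 ≤ #D)] at h1 h2 ⊢
  linear_combination -h1 - h2

lemma tauD_le_of_card_innerBoundary_le (hT : IsRegularTree T d) (hd : 2 ≤ d)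
    (hD : IsGraphDomain T D) (hD' : IsGraphDomain T D') (hcard : 2 ≤ #D) (hcard' : #D' = #D)
    (h : #(innerBoundary T D) ≤ #(innerBoundary T D')) : tauD T D ≤ tauD T D' := by
  have hmul := Nat.mul_le_mul_left (d - 1) h
  rw [hD.card_innerBoundary_mul hT hd hcard, hD'.card_innerBoundary_mul hT hd (hcard' ▸ hcard),
    hcard'] at hmul
  omega

lemma card_innerBoundary_le_of_tauD_le (hT : IsRegularTree T d) (hd : 2 ≤ d)
    (hD : IsGraphDomain T D) (hD' : IsGraphDomain T D') (hcard : 2 ≤ #D) (hcard' : #D' = #D)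
    (h : tauD T D ≤ d - 2) : #(innerBoundary T D) ≤ #(innerBoundary T D') := by
  by_contra! hlt
  have hmul := Nat.mul_le_mul_left (d - 1) (Nat.succ_le_of_lt hlt)
  rw [Nat.mul_succ, hD.card_innerBoundary_mul hT hd hcard,
    hD'.card_innerBoundary_mul hT hd (hcard' ▸ hcard), hcard'] at hmul
  omega

lemma tauD_le_card_residualBoundary_mul (hT : IsRegularTree T d) (hd : d ≠ 0) :
    tauD T D ≤ #(residualBoundary T D) * (d - 2) := by
  have hsupp : ∀ x ∈ innerBoundary T D, degIn T D x - 1 ≠ 0 → 2 ≤ degIn T D x := by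
    intro x _ hx
    omega
  rw [tauD, ← sum_filter_of_ne hsupp, ← smul_eq_mul]
  refine sum_le_card_nsmul _ _ _ fun x hx => ?_
  obtain ⟨hxB, -⟩ := mem_filter.1 hx
  have := (mem_innerBoundary_iff_degIn_lt (hT.neighborSet_finite hd x)
    (innerBoundary_subset hxB)).1 hxB
  rw [hT.2.2 x] at this
  omega

lemma IsGraphDomain.exists_mem_innerBoundary_residualBoundary_subset (hT : IsRegularTree T d)
    (hd : 2 ≤ d) (hD : IsGraphDomain T D) (hres : #(residualBoundary T D) ≤ 1) :
    ∃ x ∈ innerBoundary T D, residualBoundary T D ⊆ {x} := by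
  rcases (residualBoundary T D).eq_empty_or_nonempty with hempty | ⟨x, hx⟩
  · obtain ⟨x, hxD, hleaf⟩ := hD.exists_degIn_lt_two hT.2.1
    refine ⟨x, ?_, by simp [hempty]⟩
    rw [mem_innerBoundary_iff_degIn_lt (hT.neighborSet_finite (by omega) x) hxD, hT.2.2 x]
    omega
  · exact ⟨x, (mem_filter.1 hx).1, fun z hz => mem_singleton.2 (card_le_one.1 hres z hz x hx)⟩

lemma exists_isGraphDomain_card_residualBoundary_le_one (hT : IsRegularTree T d) (hd : 2 ≤ d)
    {n : ℕ} (hn : 1 ≤ n) :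
    ∃ E, IsGraphDomain T E ∧ #E = n ∧ #(residualBoundary T E) ≤ 1 := by
  induction n, hn using Nat.le_induction with
  | base =>
    obtain ⟨v⟩ := hT.1.nonempty
    refine ⟨{v}, ⟨singleton_nonempty v, ?_⟩, card_singleton v, ?_⟩
    · rw [coe_singleton, induce_singleton_eq_top]
      exact connected_top
    · exact (card_le_card ((filter_subset _ _).trans innerBoundary_subset)).trans
        (card_singleton v).le
  | succ n _ ih =>
    obtain ⟨E, hE, rfl, hres⟩ := ih
    obtain ⟨x, hxB, hxres⟩ := hE.exists_mem_innerBoundary_residualBoundary_subset hT hd hres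
    obtain ⟨hxE, y, hy, hxy⟩ := mem_innerBoundary.1 hxB
    refine ⟨insert y E, hE.insert_of_adj hxE hxy, card_insert_of_notMem hy, ?_⟩
    exact (card_le_card (hE.residualBoundary_insert_subset hT.2.1 hxE hy hxy hxres)).trans
      (card_singleton x).le

end

/-- Optimality criterion: a domain `D` with `|D| ≥ 2` is isoperimetrically optimal
iff `τ(D) ≤ d − 2`. -/
theorem stmt_10 {V : Type*} (d : ℕ) (hd : 2 ≤ d) (T : SimpleGraph V)
    (hT : IsRegularTree T d) (D : Finset V) (hD : IsGraphDomain T D) (hcard : 2 ≤ D.card) :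
    IsOptimal T D ↔ tauD T D ≤ d - 2 := by
  obtain ⟨E, hE, hEcard, hEres⟩ :=
    exists_isGraphDomain_card_residualBoundary_le_one hT hd (n := #D) (by omega)
  have hEtau : tauD T E ≤ d - 2 :=
    (tauD_le_card_residualBoundary_mul hT (by omega)).trans
      ((Nat.mul_le_mul_right _ hEres).trans_eq (one_mul _))
  constructor
  · intro hopt
    exact (tauD_le_of_card_innerBoundary_le hT hd hD hE hcard hEcard (hopt E hE hEcard)).trans hEtau
  · intro htau D' hD' hcard'
    exact card_innerBoundary_le_of_tauD_le hT hd hD hD' hcard hcard' htau
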